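/- For x > 0, ln x - 1/(2x) - ψ(x) = ∫_0^∞ e^{-xt} (1/2 + 1/(e^t - 1) - 1/t) dt, where ψ is the digamma function. -/

import Mathlib

open Real MeasureTheory

/-- The digamma function `ψ(x) = Γ'(x)/Γ(x) = d(log Γ)/dx`. -/
noncomputable def digamma (x : ℝ) : ℝ := deriv (fun y : ℝ => Real.log (Real.Gamma y)) x

/-!
Both sides change by the same amount under `x ↦ x + 1`. For `ψ` this is
`ψ (x + 1) = ψ x + 1 / x`. For the integral, the kernel identity
`(1 - e^{-t}) binetKernel t = (1 + e^{-t}) / 2 - (1 - e^{-t}) / t` reduces the difference to two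
Laplace integrals of `1 / 2` and Frullani's integral for `e^{-t}`, which is `log ((x + 1) / x)`.
Both sides are also `O(1 / x)`: the kernel lies in `[0, 1 / 2]`, and log-convexity of `Γ`,
compared with the secant over `[x, x + 1]`, squeezes `ψ x` between `log x - 1 / x` and `log x`.
A function that is `1`-periodic on `(0, ∞)` and `O(1 / x)` vanishes.
-/

open Set Filter Topology

lemma two_mul_exp_sub_one_le {t : ℝ} (ht : 0 ≤ t) : 2 * (exp t - 1) ≤ t * (exp t + 1) := by
  have hderiv (s : ℝ) : HasDerivAt (fun s => s * (exp s + 1) - 2 * (exp s - 1))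
      ((s - 1) * exp s + 1) s := by
    have := ((hasDerivAt_id' s).mul ((hasDerivAt_exp s).add_const 1)).sub
      (((hasDerivAt_exp s).sub_const 1).const_mul 2)
    exact this.congr_deriv (by ring)
  have hderiv_nonneg (s : ℝ) : 0 ≤ (s - 1) * exp s + 1 := by
    have := mul_le_mul_of_nonneg_right (add_one_le_exp (-s)) (exp_pos s).le
    rw [← exp_add, neg_add_cancel, exp_zero] at this
    linarith
  have := monotone_of_hasDerivAt_nonneg hderiv hderiv_nonneg ht
  simp only [zero_mul, exp_zero] at this
  linarith

noncomputable def binetKernel (t : ℝ) : ℝ := 1 / 2 + 1 / (exp t - 1) - 1 / t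

lemma binetKernel_nonneg {t : ℝ} (ht : 0 < t) : 0 ≤ binetKernel t := by
  have he : 0 < exp t - 1 := by linarith [add_one_lt_exp ht.ne']
  have := two_mul_exp_sub_one_le ht.le
  rw [binetKernel, div_add_div _ _ two_ne_zero he.ne', sub_nonneg,
    div_le_div_iff₀ ht (by positivity)]
  linarith

lemma binetKernel_le_half {t : ℝ} (ht : 0 < t) : binetKernel t ≤ 1 / 2 := by
  have := one_div_le_one_div_of_le ht (by linarith [add_one_le_exp t] : t ≤ exp t - 1)
  rw [binetKernel]
  linarith

lemma integral_exp_neg_mul_Ioi {x : ℝ} (hx : 0 < x) : ∫ t in Ioi 0, exp (-x * t) = 1 / x := by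
  rw [integral_exp_mul_Ioi (neg_neg_iff_pos.2 hx), mul_zero, exp_zero]
  ring

lemma integrableOn_exp_neg_mul_binetKernel {x : ℝ} (hx : 0 < x) :
    IntegrableOn (fun t => exp (-x * t) * binetKernel t) (Ioi 0) := by
  refine ((exp_neg_integrableOn_Ioi 0 hx).mul_const (1 / 2)).mono' ?_ ?_
  · exact (by unfold binetKernel; fun_prop : Measurable fun t => exp (-x * t) * binetKernel t)
      |>.aestronglyMeasurable
  · filter_upwards [self_mem_ae_restrict measurableSet_Ioi] with t ht
    rw [norm_mul, norm_of_nonneg (exp_pos _).le, norm_of_nonneg (binetKernel_nonneg ht)]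
    exact mul_le_mul_of_nonneg_left (binetKernel_le_half ht) (exp_pos _).le

noncomputable def binetIntegral (x : ℝ) : ℝ := ∫ t in Ioi 0, exp (-x * t) * binetKernel t

lemma binetIntegral_nonneg (x : ℝ) : 0 ≤ binetIntegral x :=
  setIntegral_nonneg measurableSet_Ioi fun _ ht =>
    mul_nonneg (exp_pos _).le (binetKernel_nonneg ht)

lemma binetIntegral_le {x : ℝ} (hx : 0 < x) : binetIntegral x ≤ 1 / (2 * x) :=
  calc binetIntegral x ≤ ∫ t in Ioi 0, exp (-x * t) * (1 / 2) :=
        setIntegral_mono_on (integrableOn_exp_neg_mul_binetKernel hx)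
          ((exp_neg_integrableOn_Ioi 0 hx).mul_const _) measurableSet_Ioi fun _ ht =>
          mul_le_mul_of_nonneg_left (binetKernel_le_half ht) (exp_pos _).le
    _ = 1 / (2 * x) := by rw [integral_mul_const, integral_exp_neg_mul_Ioi hx]; ring

lemma binetKernel_mul_one_sub_exp_neg {t : ℝ} (ht : 0 < t) :
    binetKernel t * (1 - exp (-t)) = (1 + exp (-t)) / 2 - t⁻¹ * (1 - exp (-t)) := by
  have he : exp t - 1 ≠ 0 := by linarith [add_one_lt_exp ht.ne']
  rw [binetKernel, exp_neg]
  field_simp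
  ring

lemma exp_neg_mul_binetKernel_sub {x t : ℝ} (ht : 0 < t) :
    exp (-x * t) * binetKernel t - exp (-(x + 1) * t) * binetKernel t =
      (exp (-x * t) + exp (-(x + 1) * t)) / 2 -
        t⁻¹ * (exp (-(x * t)) - exp (-((x + 1) * t))) := by
  have hsplit : exp (-(x + 1) * t) = exp (-x * t) * exp (-t) := by rw [← exp_add]; ring_nf
  simp only [← neg_mul, hsplit]
  linear_combination exp (-x * t) * binetKernel_mul_one_sub_exp_neg ht

lemma binetIntegral_sub_binetIntegral_add_one {x : ℝ} (hx : 0 < x) :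
    binetIntegral x - binetIntegral (x + 1) =
      1 / (2 * x) + 1 / (2 * (x + 1)) - log ((x + 1) / x) := by
  have hx1 : 0 < x + 1 := by linarith
  have hexp : IntegrableOn (fun t => (exp (-x * t) + exp (-(x + 1) * t)) / 2) (Ioi 0) :=
    ((exp_neg_integrableOn_Ioi 0 hx).add (exp_neg_integrableOn_Ioi 0 hx1)).div_const 2
  have hkernel := (integrableOn_exp_neg_mul_binetKernel hx).sub
    (integrableOn_exp_neg_mul_binetKernel hx1)
  have hpointwise : EqOn
      (fun t => exp (-x * t) * binetKernel t - exp (-(x + 1) * t) * binetKernel t)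
      (fun t => (exp (-x * t) + exp (-(x + 1) * t)) / 2 -
        t⁻¹ * (exp (-(x * t)) - exp (-((x + 1) * t)))) (Ioi 0) :=
    fun _ ht => exp_neg_mul_binetKernel_sub ht
  have hfrullani_int : IntegrableOn (fun t => t⁻¹ * (exp (-(x * t)) - exp (-((x + 1) * t))))
      (Ioi 0) := by
    refine (hexp.sub (hkernel.congr_fun hpointwise measurableSet_Ioi)).congr_fun
      (fun t _ => ?_) measurableSet_Ioi
    simp only [Pi.sub_apply]; ring
  have hcont : Continuous fun t : ℝ => exp (-t) := by fun_prop
  have hfrullani :=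
    Frullani.integral_Ioi_eq (hcont.locallyIntegrable.locallyIntegrableOn _) hx hx1
      ((hcont.tendsto' 0 1 (by simp)).mono_left nhdsWithin_le_nhds)
      tendsto_exp_neg_atTop_nhds_zero hfrullani_int
  rw [binetIntegral, binetIntegral, ← integral_sub (integrableOn_exp_neg_mul_binetKernel hx)
    (integrableOn_exp_neg_mul_binetKernel hx1), setIntegral_congr_fun measurableSet_Ioi hpointwise,
    integral_sub hexp hfrullani_int, integral_div, integral_add (exp_neg_integrableOn_Ioi 0 hx)
    (exp_neg_integrableOn_Ioi 0 hx1), integral_exp_neg_mul_Ioi hx, integral_exp_neg_mul_Ioi hx1]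
  simp only [smul_eq_mul] at hfrullani
  rw [hfrullani]
  field_simp
  ring

lemma differentiableAt_log_Gamma {x : ℝ} (hx : 0 < x) :
    DifferentiableAt ℝ (fun y => log (Gamma y)) x :=
  (differentiableAt_Gamma fun m => by linarith [m.cast_nonneg (α := ℝ)]).log
    (Gamma_pos_of_pos hx).ne'

lemma log_Gamma_add_one {x : ℝ} (hx : 0 < x) : log (Gamma (x + 1)) = log (Gamma x) + log x := by
  rw [Gamma_add_one hx.ne', log_mul hx.ne' (Gamma_pos_of_pos hx).ne', add_comm]

lemma digamma_add_one {x : ℝ} (hx : 0 < x) : digamma (x + 1) = digamma x + x⁻¹ := by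
  have hshift : (fun y => log (Gamma (y + 1))) =ᶠ[𝓝 x] fun y => log (Gamma y) + log y := by
    filter_upwards [eventually_gt_nhds hx] with y hy using log_Gamma_add_one hy
  have hsum := (differentiableAt_log_Gamma hx).hasDerivAt.add (hasDerivAt_log hx.ne')
  rw [digamma, ← deriv_comp_add_const, hshift.deriv_eq]
  exact hsum.deriv

lemma slope_log_Gamma {x : ℝ} (hx : 0 < x) : slope (log ∘ Gamma) x (x + 1) = log x := by
  rw [slope_def_field, Function.comp_apply, Function.comp_apply, log_Gamma_add_one hx]
  ring

lemma digamma_le_log {x : ℝ} (hx : 0 < x) : digamma x ≤ log x :=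
  slope_log_Gamma hx ▸ convexOn_log_Gamma.deriv_le_slope hx (by simp; linarith) (by linarith)
    (differentiableAt_log_Gamma hx)

lemma log_le_digamma_add_one {x : ℝ} (hx : 0 < x) : log x ≤ digamma (x + 1) :=
  slope_log_Gamma hx ▸ convexOn_log_Gamma.slope_le_deriv hx (by simp; linarith) (by linarith)
    (differentiableAt_log_Gamma (by linarith))

lemma abs_log_sub_digamma_le {x : ℝ} (hx : 0 < x) :
    |log x - 1 / (2 * x) - digamma x| ≤ 1 / (2 * x) := by
  have hupper := digamma_le_log hx
  have hlower := log_le_digamma_add_one hx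
  rw [digamma_add_one hx] at hlower
  have hhalf : 1 / (2 * x) = x⁻¹ / 2 := by ring
  rw [abs_le, hhalf]
  constructor <;> linarith

lemma eq_zero_of_add_one_eq_of_abs_le {H : ℝ → ℝ} {C x : ℝ} (hx : 0 < x)
    (hper : ∀ y, 0 < y → H (y + 1) = H y) (hbound : ∀ y, 0 < y → |H y| ≤ C / y) : H x = 0 := by
  have hshift (n : ℕ) : H (x + n) = H x := by
    induction n with
    | zero => simp
    | succ n ih => rw [Nat.cast_succ, ← add_assoc, hper _ (by positivity), ih]
  have hlim : Tendsto (fun n : ℕ => C / (x + n)) atTop (𝓝 0) :=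
    tendsto_const_nhds.div_atTop (tendsto_atTop_add_const_left _ x tendsto_natCast_atTop_atTop)
  exact abs_nonpos_iff.1 <|
    ge_of_tendsto' hlim fun n => hshift n ▸ hbound _ (by positivity)

theorem binet_digamma_integral (x : ℝ) (hx : 0 < x) :
    Real.log x - 1 / (2 * x) - digamma x =
      ∫ t in Set.Ioi (0 : ℝ),
        Real.exp (-x * t) * (1 / 2 + 1 / (Real.exp t - 1) - 1 / t) := by
  refine sub_eq_zero.1 (eq_zero_of_add_one_eq_of_abs_le (C := 1)
    (H := fun y => log y - 1 / (2 * y) - digamma y - binetIntegral y) hx (fun y hy => ?_)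
    (fun y hy => ?_))
  · have hrec := binetIntegral_sub_binetIntegral_add_one hy
    rw [log_div (by positivity) hy.ne'] at hrec
    simp only [digamma_add_one hy]
    linear_combination hrec
  · calc |log y - 1 / (2 * y) - digamma y - binetIntegral y|
        ≤ |log y - 1 / (2 * y) - digamma y| + |binetIntegral y| := abs_sub _ _
      _ ≤ 1 / (2 * y) + 1 / (2 * y) := add_le_add (abs_log_sub_digamma_le hy)
          ((abs_of_nonneg (binetIntegral_nonneg y)).trans_le (binetIntegral_le hy))
      _ = 1 / y := by ring
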